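/- arXiv:2512.00788 — 2 statements merged into one kernel-verified Lean document; each statement's English description precedes it below -/
import Mathlib

section
/- (Vanishing of far off-diagonal transition matrix elements for commuting Hamiltonians.) Let ι be a finite type, let h : ι → Matrix n n ℂ be a family of pairwise commuting Hermitian matrices, set H = ∑_a h a, and let A be a matrix such that Commute A (h a) for all a outside a subset T ⊆ ι, with R = ∑_{a ∈ T} ‖h a‖. If (μ, u) and (ν, v) are eigenpairs of H with real eigenvalues satisfying μ - ν > 2 * R, then star u ⬝ᵥ (A.mulVec v) = 0. Equivalently, the transition matrix element of A between the eigenspace of H with energy at least E' and the eigenspace with energy at most E vanishes whenever E' - E > 2R. -/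
open scoped Matrix.Norms.L2Operator
open scoped Matrix

/-!
Split `H = H_T + H_C` with `H_T = ∑ a ∈ T, h a`. Since `H_C` commutes with `H_T` and with `A`,
the iterated commutators agree: `ad_H^k A = ad_{H_T}^k A`. Pairing with the eigenvectors gives
`⟪u, ad_H^k A v⟫ = (μ - ν)^k ⟪u, A v⟫`, while `‖ad_{H_T}^k A‖ ≤ (2R)^k ‖A‖`. Since `μ - ν > 2R`,
letting `k → ∞` forces `⟪u, A v⟫ = 0`.
-/

section Ring

variable {R : Type*} [Ring R]

theorem Commute.lie_right {a b c : R} (hab : Commute a b) (hac : Commute a c) :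
    Commute a ⁅b, c⁆ :=
  (hab.mul_right hac).sub_right (hac.mul_right hab)

theorem Commute.iterate_lie_right {a b c : R} (hab : Commute a b) (hac : Commute a c) (k : ℕ) :
    Commute a ((fun x => ⁅b, x⁆)^[k] c) := by
  induction k with
  | zero => exact hac
  | succ k ih => rw [Function.iterate_succ_apply']; exact hab.lie_right ih

theorem iterate_lie_add_of_commute {a b c : R} (hab : Commute a b) (hbc : Commute b c) (k : ℕ) :
    (fun x => ⁅a + b, x⁆)^[k] c = (fun x => ⁅a, x⁆)^[k] c := by
  induction k with
  | zero => rfl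
  | succ k ih =>
    rw [Function.iterate_succ_apply', Function.iterate_succ_apply', ih, Ring.lie_def,
      Ring.lie_def, add_mul, mul_add, (hab.symm.iterate_lie_right hbc k).eq]
    abel

end Ring

section NormedRing

variable {R : Type*} [NonUnitalNormedRing R]

theorem norm_lie_le (a x : R) : ‖⁅a, x⁆‖ ≤ 2 * ‖a‖ * ‖x‖ := by
  rw [Ring.lie_def]
  calc ‖a * x - x * a‖ ≤ ‖a‖ * ‖x‖ + ‖x‖ * ‖a‖ :=
        (norm_sub_le _ _).trans (add_le_add (norm_mul_le _ _) (norm_mul_le _ _))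
    _ = 2 * ‖a‖ * ‖x‖ := by ring

theorem norm_iterate_lie_le (a x : R) (k : ℕ) :
    ‖(fun y => ⁅a, y⁆)^[k] x‖ ≤ (2 * ‖a‖) ^ k * ‖x‖ := by
  induction k with
  | zero => simp
  | succ k ih =>
    rw [Function.iterate_succ_apply', pow_succ']
    calc _ ≤ 2 * ‖a‖ * ‖(fun y => ⁅a, y⁆)^[k] x‖ := norm_lie_le _ _
      _ ≤ 2 * ‖a‖ * ((2 * ‖a‖) ^ k * ‖x‖) := by gcongr
      _ = _ := by ring

end NormedRing

namespace Matrix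

variable {𝕜 m n : Type*} [RCLike 𝕜] [Fintype m] [Fintype n]

theorem norm_star_dotProduct_mulVec_le [DecidableEq n] (M : Matrix m n 𝕜) (u : m → 𝕜)
    (v : n → 𝕜) :
    ‖star u ⬝ᵥ M *ᵥ v‖ ≤ ‖WithLp.toLp 2 u‖ * ‖M‖ * ‖WithLp.toLp 2 v‖ := by
  rw [dotProduct_comm, ← EuclideanSpace.inner_toLp_toLp, mul_assoc]
  exact (norm_inner_le_norm _ _).trans (by gcongr; exact M.l2_opNorm_mulVec _)

section Eigenpairs

variable {H : Matrix n n 𝕜} {μ ν : ℝ} {u v : n → 𝕜}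

theorem star_dotProduct_lie_mulVec (hH : H.IsHermitian) (hu : H *ᵥ u = (μ : 𝕜) • u)
    (hv : H *ᵥ v = (ν : 𝕜) • v) (B : Matrix n n 𝕜) :
    star u ⬝ᵥ ⁅H, B⁆ *ᵥ v = ((μ - ν : ℝ) : 𝕜) * (star u ⬝ᵥ B *ᵥ v) := by
  have hu' : star u ᵥ* H = (μ : 𝕜) • star u := by
    rw [← hH.eq, ← star_mulVec, hu, star_smul, RCLike.star_def, RCLike.conj_ofReal]
  rw [Ring.lie_def, sub_mulVec, dotProduct_sub, ← mulVec_mulVec, ← mulVec_mulVec, hv,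
    dotProduct_mulVec, hu', mulVec_smul, dotProduct_smul, smul_dotProduct, smul_eq_mul,
    smul_eq_mul]
  push_cast
  ring

theorem star_dotProduct_iterate_lie_mulVec (hH : H.IsHermitian) (hu : H *ᵥ u = (μ : 𝕜) • u)
    (hv : H *ᵥ v = (ν : 𝕜) • v) (B : Matrix n n 𝕜) (k : ℕ) :
    star u ⬝ᵥ (fun X => ⁅H, X⁆)^[k] B *ᵥ v = ((μ - ν : ℝ) : 𝕜) ^ k * (star u ⬝ᵥ B *ᵥ v) := by
  induction k with
  | zero => simp
  | succ k ih =>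
    rw [Function.iterate_succ_apply', star_dotProduct_lie_mulVec hH hu hv, ih, pow_succ']
    ring

end Eigenpairs

end Matrix

theorem eq_zero_of_forall_pow_mul_le {x s d C : ℝ} (hx : 0 ≤ x) (hs : 0 ≤ s) (hsd : s < d)
    (h : ∀ k : ℕ, d ^ k * x ≤ s ^ k * C) : x = 0 := by
  have hd : 0 < d := hs.trans_lt hsd
  have hlim : Filter.Tendsto (fun k : ℕ => (s / d) ^ k * C) Filter.atTop (nhds 0) := by
    simpa using (tendsto_pow_atTop_nhds_zero_of_lt_one (div_nonneg hs hd.le)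
      ((div_lt_one hd).2 hsd)).mul_const C
  refine le_antisymm (ge_of_tendsto' hlim fun k => ?_) hx
  rw [div_pow, div_mul_eq_mul_div, le_div_iff₀ (pow_pos hd k), mul_comm]
  exact h k

theorem transition_element_vanishes_general
    {n : Type*} [Fintype n] [DecidableEq n]
    {ι : Type*} [Fintype ι]
    (h : ι → Matrix n n ℂ)
    (hherm : ∀ a, (h a).IsHermitian)
    (hcomm : ∀ a b, Commute (h a) (h b))
    (H : Matrix n n ℂ) (hH : H = ∑ a, h a)
    (A : Matrix n n ℂ) (T : Finset ι)
    (hA : ∀ a ∉ T, Commute A (h a))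
    (R : ℝ) (hR : R = ∑ a ∈ T, ‖h a‖)
    (μ ν : ℝ) (u v : n → ℂ)
    (hu : H.mulVec u = (μ : ℂ) • u) (hv : H.mulVec v = (ν : ℂ) • v)
    (hgap : μ - ν > 2 * R) :
    star u ⬝ᵥ A.mulVec v = 0 := by
  classical
  set HT := ∑ a ∈ T, h a
  set HC := ∑ a ∈ Tᶜ, h a
  have hsplit : H = HT + HC := by rw [hH, Finset.sum_add_sum_compl]
  have hTC : Commute HT HC :=
    Commute.sum_left _ _ _ fun a _ => Commute.sum_right _ _ _ fun b _ => hcomm a b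
  have hCA : Commute HC A :=
    Commute.sum_left _ _ _ fun a ha => (hA a (Finset.mem_compl.1 ha)).symm
  have hHerm : H.IsHermitian := hH ▸ isSelfAdjoint_sum _ fun a _ => (hherm a).isSelfAdjoint
  have hHT : ‖HT‖ ≤ R := hR ▸ norm_sum_le _ _
  have hR0 : 0 ≤ 2 * R := by rw [hR]; positivity
  refine norm_eq_zero.1 <| eq_zero_of_forall_pow_mul_le (norm_nonneg _) hR0 hgap
    (C := ‖WithLp.toLp 2 u‖ * ‖A‖ * ‖WithLp.toLp 2 v‖) fun k => ?_
  calc (μ - ν) ^ k * ‖star u ⬝ᵥ A *ᵥ v‖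
      = ‖star u ⬝ᵥ (fun X => ⁅H, X⁆)^[k] A *ᵥ v‖ := by
        rw [Matrix.star_dotProduct_iterate_lie_mulVec hHerm hu hv, norm_mul, norm_pow,
          RCLike.norm_ofReal, abs_of_pos (by linarith)]
    _ = ‖star u ⬝ᵥ (fun X => ⁅HT, X⁆)^[k] A *ᵥ v‖ := by
        rw [hsplit, iterate_lie_add_of_commute hTC hCA]
    _ ≤ ‖WithLp.toLp 2 u‖ * ((2 * R) ^ k * ‖A‖) * ‖WithLp.toLp 2 v‖ :=
        (Matrix.norm_star_dotProduct_mulVec_le _ u v).trans <| by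
          gcongr
          exact (norm_iterate_lie_le HT A k).trans (by gcongr)
    _ = (2 * R) ^ k * (‖WithLp.toLp 2 u‖ * ‖A‖ * ‖WithLp.toLp 2 v‖) := by ring

/-- Lemma 1 of the paper: vanishing of far off-diagonal transition
matrix elements for commuting Hamiltonians. For a pairwise commuting family of
Hermitian matrices `h` with sum `H`, and an operator `A` commuting with all terms
outside `T` (`R = ∑_{a ∈ T} ‖h a‖`), the transition matrix element of `A` between
eigenpairs `(μ, u)` and `(ν, v)` of `H` vanishes whenever `μ - ν > 2R`. -/
theorem transition_element_vanishes
    {n : Type*} [Fintype n] [DecidableEq n] [Nonempty n]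
    {ι : Type*} [Fintype ι]
    (h : ι → Matrix n n ℂ)
    (hherm : ∀ a, (h a).IsHermitian)
    (hcomm : ∀ a b, Commute (h a) (h b))
    (H : Matrix n n ℂ) (hH : H = ∑ a, h a)
    (A : Matrix n n ℂ) (T : Finset ι)
    (hA : ∀ a ∉ T, Commute A (h a))
    (R : ℝ) (hR : R = ∑ a ∈ T, ‖h a‖)
    (μ ν : ℝ) (u v : n → ℂ)
    (hu : H.mulVec u = (μ : ℂ) • u) (hv : H.mulVec v = (ν : ℂ) • v)
    (hgap : μ - ν > 2 * R) :
    star u ⬝ᵥ A.mulVec v = 0 :=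
  transition_element_vanishes_general h hherm hcomm H hH A T hA R hR μ ν u v hu hv hgap
end

section
/- Fix N ≥ 3, let H_B and H_C be the MCS battery and charger Hamiltonians on N+1 qubits, and let φ be the product state |+z⟩₀ ⊗ |+x⟩^{⊗N}, i.e. the unit vector φ f = if f 0 = 0 then (2:ℂ)^(-(N:ℝ)/2) else 0. Then star φ ⬝ᵥ (⁅H_B, H_C⁆.mulVec φ) = 2 * Complex.I * N^2, and consequently ‖⁅H_B, H_C⁆‖ ≥ 2 * N^2. Thus the commutator between the MCS battery and charger exhibits superextensive (quadratic) growth with system size. -/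
open scoped Matrix.Norms.L2Operator
open scoped Matrix

/-- The 2×2 matrix `P` acting on site `j` of a chain of `N+1` qubits
(identity elsewhere): `P⁽ʲ⁾ f g = P (f j) (g j) * ∏_{k ≠ j} δ_{f k, g k}`. -/
def siteOp {N : ℕ} (P : Matrix (Fin 2) (Fin 2) ℂ) (j : Fin (N + 1)) :
    Matrix (Fin (N + 1) → Fin 2) (Fin (N + 1) → Fin 2) ℂ :=
  fun f g => P (f j) (g j) * ∏ k ∈ Finset.univ.erase j, (if f k = g k then (1 : ℂ) else 0)

/-- Pauli X. -/
def σx : Matrix (Fin 2) (Fin 2) ℂ := !![0, 1; 1, 0]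
/-- Pauli Y. -/
def σy : Matrix (Fin 2) (Fin 2) ℂ := !![0, -Complex.I; Complex.I, 0]
/-- Pauli Z. -/
def σz : Matrix (Fin 2) (Fin 2) ℂ := !![1, 0; 0, -1]

/-- The peripheral site labelled `i+1` (site `0` is the central spin). -/
def per {N : ℕ} (i : Fin N) : Fin (N + 1) := i.succ

/-- The cyclic successor `i ⊕ 1` among the peripheral sites `{1, …, N}`. -/
def perS {N : ℕ} (i : Fin N) : Fin (N + 1) :=
  ⟨(i.1 + 1) % N + 1, Nat.succ_lt_succ (Nat.mod_lt _ i.pos)⟩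
/-- The cyclic predecessor `i ⊖ 1` among the peripheral sites `{1, …, N}`. -/
def perP {N : ℕ} (i : Fin N) : Fin (N + 1) :=
  ⟨(i.1 + (N - 1)) % N + 1, Nat.succ_lt_succ (Nat.mod_lt _ i.pos)⟩

/-- The modified central-spin (MCS) battery Hamiltonian
`H_B = ∑_{i=1}^N σx⁽⁰⁾ σx⁽ⁱ⁾ + ∑_{i=1}^N σz⁽ⁱ⁾ σz⁽ⁱ⊕¹⁾` on `N+1` qubits (PBC). -/
noncomputable def HB (N : ℕ) :
    Matrix (Fin (N + 1) → Fin 2) (Fin (N + 1) → Fin 2) ℂ :=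
  (∑ i : Fin N, siteOp σx 0 * siteOp σx (per i)) +
  (∑ i : Fin N, siteOp σz (per i) * siteOp σz (perS i))

/-- The modified central-spin (MCS) charger Hamiltonian
`H_C = ∑_{i=1}^N σy⁽⁰⁾ σx⁽ⁱ⁾ + ∑_{i=1}^N σz⁽ⁱ⁾ σz⁽ⁱ⊕¹⁾` on `N+1` qubits (PBC). -/
noncomputable def HC (N : ℕ) :
    Matrix (Fin (N + 1) → Fin 2) (Fin (N + 1) → Fin 2) ℂ :=
  (∑ i : Fin N, siteOp σy 0 * siteOp σx (per i)) +
  (∑ i : Fin N, siteOp σz (per i) * siteOp σz (perS i))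

/-- The product state `|+z⟩₀ ⊗ |+x⟩^{⊗N}`: the unit vector
`φ f = if f 0 = 0 then 2^{-N/2} else 0`. -/
noncomputable def φprod (N : ℕ) : (Fin (N + 1) → Fin 2) → ℂ :=
  fun f => if f 0 = 0 then (((2 : ℝ) ^ (-(N : ℝ) / 2) : ℝ) : ℂ) else 0

/-!
Write `S = ∑ᵢ σx⁽ⁱ⁾` and `Z = ∑ᵢ σz⁽ⁱ⁾ σz⁽ⁱ⊕¹⁾`, so that `H_B = σx⁽⁰⁾ S + Z`, `H_C = σy⁽⁰⁾ S + Z`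
and `⁅H_B, H_C⁆ = ⁅σx⁽⁰⁾ S, σy⁽⁰⁾ S⁆ + ⁅σx⁽⁰⁾ S, Z⁆ - ⁅σy⁽⁰⁾ S, Z⁆`. The product state `φ`
satisfies `S φ = N φ` and `σz⁽⁰⁾ φ = φ`. Since `S` acts away from site `0`, the first commutator
is `⁅σx, σy⁆⁽⁰⁾ S² = 2i σz⁽⁰⁾ S²`, with expectation `2i N²`. The other two anticommute with the
hermitian `σz⁽⁰⁾`, so their expectation in its eigenvector `φ` equals its own negative and
vanishes. Finally `|⟨φ, A φ⟩| ≤ ‖A‖` for a unit vector `φ`.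
-/

section Operators

variable {n R : Type*} [Fintype n]

theorem lie_mul_mul_of_commute [Ring R] {A B S : R} (hA : Commute S A) (hB : Commute S B) :
    ⁅A * S, B * S⁆ = ⁅A, B⁆ * (S * S) := by
  rw [Ring.lie_def, Ring.lie_def, sub_mul, mul_assoc A, hB.left_comm, mul_assoc B, hA.left_comm]
  simp only [mul_assoc]

theorem semiconjBy_neg_lie [Ring R] {z a t : R} (ha : SemiconjBy z a (-a)) (ht : Commute z t) :
    SemiconjBy z ⁅a, t⁆ (-⁅a, t⁆) := by
  have h := (ha.mul_right ht).sub_right (SemiconjBy.mul_right ht ha)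
  rw [neg_mul, mul_neg, ← neg_sub'] at h
  rwa [Ring.lie_def]

theorem star_dotProduct_mulVec_eq_zero_of_semiconjBy_neg [CommRing R] [StarRing R]
    [IsAddTorsionFree R] {Z O : Matrix n n R} {v : n → R} (hZ : Zᴴ = Z) (hv : Z *ᵥ v = v)
    (hO : SemiconjBy Z O (-O)) : star v ⬝ᵥ (O *ᵥ v) = 0 := by
  refine self_eq_neg.mp ?_
  calc star v ⬝ᵥ (O *ᵥ v) = star v ⬝ᵥ ((O * Z) *ᵥ v) := by rw [← Matrix.mulVec_mulVec, hv]
    _ = -(star v ⬝ᵥ (Z *ᵥ (O *ᵥ v))) := by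
      rw [← neg_neg (O * Z), ← neg_mul, ← hO.eq, Matrix.neg_mulVec, dotProduct_neg,
        Matrix.mulVec_mulVec]
    _ = -(star v ⬝ᵥ (O *ᵥ v)) := by
      rw [Matrix.dotProduct_mulVec, ← hZ, ← Matrix.star_mulVec, hv]

theorem norm_star_dotProduct_mulVec_le {𝕜 : Type*} [RCLike 𝕜] [DecidableEq n]
    (A : Matrix n n 𝕜) {v : n → 𝕜} (hv : star v ⬝ᵥ v = 1) : ‖star v ⬝ᵥ (A *ᵥ v)‖ ≤ ‖A‖ := by
  set ψ : EuclideanSpace 𝕜 n := WithLp.toLp 2 v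
  have hψ : ‖ψ‖ = 1 := by
    rw [norm_eq_sqrt_re_inner (𝕜 := 𝕜), EuclideanSpace.inner_toLp_toLp, dotProduct_comm, hv]
    simp
  calc ‖star v ⬝ᵥ (A *ᵥ v)‖ = ‖inner 𝕜 ψ (WithLp.toLp 2 (A *ᵥ v))‖ := by
        rw [EuclideanSpace.inner_toLp_toLp, dotProduct_comm]
    _ ≤ ‖ψ‖ * ‖(EuclideanSpace.equiv n 𝕜).symm (A *ᵥ ψ.ofLp)‖ := norm_inner_le_norm _ _
    _ ≤ ‖ψ‖ * (‖A‖ * ‖ψ‖) := by gcongr; exact A.l2_opNorm_mulVec ψ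
    _ = ‖A‖ := by rw [hψ, one_mul, mul_one]

end Operators

section Tensor

variable {ι d R : Type*} [Fintype ι] [CommSemiring R]

def tensorVec (v : ι → d → R) : (ι → d) → R := fun f => ∏ k, v k (f k)

def tensorMat (m : ι → Matrix d d R) : Matrix (ι → d) (ι → d) R :=
  Matrix.of fun f g => ∏ k, m k (f k) (g k)

theorem tensorMat_mulVec_tensorVec [DecidableEq ι] [Fintype d] (m : ι → Matrix d d R)
    (v : ι → d → R) : tensorMat m *ᵥ tensorVec v = tensorVec fun k => m k *ᵥ v k := by
  funext f
  simp only [tensorVec, tensorMat, Matrix.mulVec, dotProduct, Matrix.of_apply,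
    Fintype.prod_sum, ← Finset.prod_mul_distrib]

theorem tensorMat_mul_tensorMat [DecidableEq ι] [Fintype d] (m n : ι → Matrix d d R) :
    tensorMat m * tensorMat n = tensorMat (m * n) := by
  ext f h
  simp only [tensorMat, Matrix.mul_apply, Matrix.of_apply, Pi.mul_apply,
    Fintype.prod_sum, ← Finset.prod_mul_distrib]

theorem star_tensorVec_dotProduct_tensorVec [DecidableEq ι] [Fintype d] [StarRing R]
    (u v : ι → d → R) : star (tensorVec u) ⬝ᵥ tensorVec v = ∏ k, star (u k) ⬝ᵥ v k := by
  simp only [tensorVec, dotProduct, Pi.star_apply, Fintype.prod_sum, star_prod,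
    ← Finset.prod_mul_distrib]

theorem conjTranspose_tensorMat [StarRing R] (m : ι → Matrix d d R) :
    (tensorMat m)ᴴ = tensorMat fun k => (m k)ᴴ := by
  ext f g
  simp [tensorMat, star_prod]

end Tensor

section SiteOp

variable {N : ℕ}

theorem siteOp_eq_tensorMat (P : Matrix (Fin 2) (Fin 2) ℂ) (j : Fin (N + 1)) :
    siteOp P j = tensorMat (Function.update 1 j P) := by
  ext f g
  rw [siteOp, tensorMat, Matrix.of_apply, ← Finset.mul_prod_erase _ _ (Finset.mem_univ j),
    Function.update_self]
  congr 1
  refine Finset.prod_congr rfl fun k hk => ?_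
  rw [Function.update_of_ne (Finset.ne_of_mem_erase hk), Pi.one_apply, Matrix.one_apply]

theorem siteOp_mul_siteOp (P Q : Matrix (Fin 2) (Fin 2) ℂ) (j : Fin (N + 1)) :
    siteOp P j * siteOp Q j = siteOp (P * Q) j := by
  simp only [siteOp_eq_tensorMat, tensorMat_mul_tensorMat, ← Function.update_mul, mul_one]

theorem siteOp_commute (P Q : Matrix (Fin 2) (Fin 2) ℂ) {j k : Fin (N + 1)} (hjk : j ≠ k) :
    Commute (siteOp P j) (siteOp Q k) := by
  rw [Commute, SemiconjBy, siteOp_eq_tensorMat, siteOp_eq_tensorMat, tensorMat_mul_tensorMat,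
    tensorMat_mul_tensorMat]
  congr 1
  funext l
  rcases eq_or_ne l j with rfl | hlj
  · simp [Function.update_of_ne hjk]
  · rcases eq_or_ne l k with rfl | hlk
    · simp [Function.update_of_ne hlj]
    · simp [Function.update_of_ne hlj, Function.update_of_ne hlk]

theorem SemiconjBy.siteOp {Z P Q : Matrix (Fin 2) (Fin 2) ℂ} (h : SemiconjBy Z P Q)
    (j : Fin (N + 1)) : SemiconjBy (siteOp Z j) (siteOp P j) (siteOp Q j) := by
  rw [SemiconjBy, siteOp_mul_siteOp, siteOp_mul_siteOp, h.eq]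

theorem conjTranspose_siteOp (P : Matrix (Fin 2) (Fin 2) ℂ) (j : Fin (N + 1)) :
    (siteOp P j)ᴴ = siteOp Pᴴ j := by
  simp only [siteOp_eq_tensorMat, conjTranspose_tensorMat]
  congr 1
  funext k
  rcases eq_or_ne k j with rfl | hk
  · simp
  · simp [Function.update_of_ne hk]

theorem siteOp_neg (P : Matrix (Fin 2) (Fin 2) ℂ) (j : Fin (N + 1)) :
    siteOp (-P) j = -siteOp P j := by
  ext f g
  simp [siteOp]

theorem siteOp_sub (P Q : Matrix (Fin 2) (Fin 2) ℂ) (j : Fin (N + 1)) :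
    siteOp (P - Q) j = siteOp P j - siteOp Q j := by
  ext f g
  simp [siteOp, sub_mul]

theorem siteOp_smul (c : ℂ) (P : Matrix (Fin 2) (Fin 2) ℂ) (j : Fin (N + 1)) :
    siteOp (c • P) j = c • siteOp P j := by
  ext f g
  simp [siteOp, mul_assoc]

theorem siteOp_lie (P Q : Matrix (Fin 2) (Fin 2) ℂ) (j : Fin (N + 1)) :
    ⁅siteOp P j, siteOp Q j⁆ = siteOp ⁅P, Q⁆ j := by
  rw [Ring.lie_def, Ring.lie_def, siteOp_sub, siteOp_mul_siteOp, siteOp_mul_siteOp]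

theorem siteOp_mulVec_tensorVec_of_mulVec_eq {P : Matrix (Fin 2) (Fin 2) ℂ} {j : Fin (N + 1)}
    {v : Fin (N + 1) → Fin 2 → ℂ} (h : P *ᵥ v j = v j) :
    siteOp P j *ᵥ tensorVec v = tensorVec v := by
  rw [siteOp_eq_tensorMat, tensorMat_mulVec_tensorVec]
  congr 1
  funext k
  rcases eq_or_ne k j with rfl | hk
  · simp [h]
  · simp [Function.update_of_ne hk]

end SiteOp

theorem σz_semiconjBy_σx : SemiconjBy σz σx (-σx) := by
  ext i j; fin_cases i <;> fin_cases j <;> simp [σx, σz]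

theorem σz_semiconjBy_σy : SemiconjBy σz σy (-σy) := by
  ext i j; fin_cases i <;> fin_cases j <;> simp [σy, σz]

theorem σx_lie_σy : ⁅σx, σy⁆ = (2 * Complex.I) • σz := by
  ext i j; fin_cases i <;> fin_cases j <;> simp [Ring.lie_def, σx, σy, σz] <;> ring

theorem σz_conjTranspose : σzᴴ = σz := by
  ext i j; fin_cases i <;> fin_cases j <;> simp [σz]

theorem σz_mulVec_single_zero : σz *ᵥ Pi.single 0 1 = Pi.single 0 1 := by
  ext i; fin_cases i <;> simp [σz]

theorem σx_mulVec_const (c : ℂ) : σx *ᵥ (fun _ => c) = fun _ => c := by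
  ext i; fin_cases i <;> simp [σx, Matrix.mulVec, dotProduct]

noncomputable def mcsFactor (N : ℕ) : Fin (N + 1) → Fin 2 → ℂ :=
  Fin.cons (Pi.single 0 1) fun _ _ => (((2 : ℝ) ^ (-(1 : ℝ) / 2) : ℝ) : ℂ)

noncomputable def peripheralX (N : ℕ) : Matrix (Fin (N + 1) → Fin 2) (Fin (N + 1) → Fin 2) ℂ :=
  ∑ i : Fin N, siteOp σx (per i)

noncomputable def ringZZ (N : ℕ) : Matrix (Fin (N + 1) → Fin 2) (Fin (N + 1) → Fin 2) ℂ :=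
  ∑ i : Fin N, siteOp σz (per i) * siteOp σz (perS i)

section MCS

variable {N : ℕ}

theorem φprod_eq_tensorVec : φprod N = tensorVec (mcsFactor N) := by
  funext f
  simp only [φprod, tensorVec, mcsFactor, Fin.prod_univ_succ, Fin.cons_zero, Fin.cons_succ,
    Finset.prod_const, Finset.card_univ, Fintype.card_fin, Pi.single_apply, ite_mul, one_mul,
    zero_mul]
  rw [← Complex.ofReal_pow, ← Real.rpow_natCast, ← Real.rpow_mul zero_le_two]
  ring_nf

theorem star_φprod_dotProduct_φprod : star (φprod N) ⬝ᵥ φprod N = 1 := by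
  rw [φprod_eq_tensorVec, star_tensorVec_dotProduct_tensorVec, Fin.prod_univ_succ]
  simp [mcsFactor, dotProduct, ← Complex.ofReal_mul, ← Real.rpow_add, Real.rpow_neg_one]

theorem siteOp_σz_zero_mulVec_φprod : siteOp σz 0 *ᵥ φprod N = φprod N := by
  rw [φprod_eq_tensorVec]
  exact siteOp_mulVec_tensorVec_of_mulVec_eq σz_mulVec_single_zero

theorem siteOp_σx_per_mulVec_φprod (i : Fin N) : siteOp σx (per i) *ᵥ φprod N = φprod N := by
  rw [φprod_eq_tensorVec]
  exact siteOp_mulVec_tensorVec_of_mulVec_eq (σx_mulVec_const _)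

theorem peripheralX_mulVec_φprod : peripheralX N *ᵥ φprod N = (N : ℂ) • φprod N := by
  simp only [peripheralX, Matrix.sum_mulVec, siteOp_σx_per_mulVec_φprod, Finset.sum_const,
    Finset.card_univ, Fintype.card_fin, Nat.cast_smul_eq_nsmul]

theorem per_ne_zero (i : Fin N) : per i ≠ 0 := Fin.succ_ne_zero i

theorem perS_ne_zero (i : Fin N) : perS i ≠ 0 := Fin.ext_iff.not.mpr (Nat.succ_ne_zero _)

theorem commute_siteOp_zero_peripheralX (P : Matrix (Fin 2) (Fin 2) ℂ) :
    Commute (siteOp P 0) (peripheralX N) :=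
  Commute.sum_right _ _ _ fun i _ => siteOp_commute P σx (per_ne_zero i).symm

theorem commute_siteOp_zero_ringZZ (P : Matrix (Fin 2) (Fin 2) ℂ) :
    Commute (siteOp P 0) (ringZZ N) :=
  Commute.sum_right _ _ _ fun i _ => (siteOp_commute P σz (per_ne_zero i).symm).mul_right
    (siteOp_commute P σz (perS_ne_zero i).symm)

theorem lie_HB_HC : ⁅HB N, HC N⁆ = ⁅siteOp σx 0 * peripheralX N, siteOp σy 0 * peripheralX N⁆
    + ⁅siteOp σx 0 * peripheralX N, ringZZ N⁆ - ⁅siteOp σy 0 * peripheralX N, ringZZ N⁆ := by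
  have hB : HB N = siteOp σx 0 * peripheralX N + ringZZ N := by
    rw [HB, peripheralX, ringZZ, Finset.mul_sum]
  have hC : HC N = siteOp σy 0 * peripheralX N + ringZZ N := by
    rw [HC, peripheralX, ringZZ, Finset.mul_sum]
  rw [hB, hC]
  simp only [Ring.lie_def, add_mul, mul_add]
  abel

theorem φprod_expectation_lie_peripheralX :
    star (φprod N) ⬝ᵥ (⁅siteOp σx 0 * peripheralX N, siteOp σy 0 * peripheralX N⁆ *ᵥ φprod N)
      = 2 * Complex.I * (N : ℂ) ^ 2 := by
  rw [lie_mul_mul_of_commute (commute_siteOp_zero_peripheralX _).symm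
    (commute_siteOp_zero_peripheralX _).symm, siteOp_lie, σx_lie_σy, siteOp_smul]
  simp only [← Matrix.mulVec_mulVec, Matrix.smul_mulVec, Matrix.mulVec_smul,
    peripheralX_mulVec_φprod, siteOp_σz_zero_mulVec_φprod, dotProduct_smul,
    star_φprod_dotProduct_φprod, smul_eq_mul]
  ring

theorem φprod_expectation_lie_ringZZ {P : Matrix (Fin 2) (Fin 2) ℂ} (hP : SemiconjBy σz P (-P)) :
    star (φprod N) ⬝ᵥ (⁅siteOp P 0 * peripheralX N, ringZZ N⁆ *ᵥ φprod N) = 0 := by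
  have hZ : (siteOp σz (0 : Fin (N + 1)))ᴴ = siteOp σz 0 := by
    rw [conjTranspose_siteOp, σz_conjTranspose]
  have hPS := (hP.siteOp 0).mul_right (commute_siteOp_zero_peripheralX (N := N) σz)
  rw [siteOp_neg, neg_mul] at hPS
  exact star_dotProduct_mulVec_eq_zero_of_semiconjBy_neg hZ siteOp_σz_zero_mulVec_φprod
    (semiconjBy_neg_lie hPS (commute_siteOp_zero_ringZZ σz))

end MCS

theorem mcs_commutator_superextensive_general (N : ℕ) :
    star (φprod N) ⬝ᵥ ((⁅HB N, HC N⁆).mulVec (φprod N))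
        = 2 * Complex.I * (N : ℂ) ^ 2 ∧
    2 * (N : ℝ) ^ 2 ≤ ‖⁅HB N, HC N⁆‖ := by
  have hexp : star (φprod N) ⬝ᵥ (⁅HB N, HC N⁆ *ᵥ φprod N) = 2 * Complex.I * (N : ℂ) ^ 2 := by
    rw [lie_HB_HC, Matrix.sub_mulVec, Matrix.add_mulVec, dotProduct_sub, dotProduct_add,
      φprod_expectation_lie_peripheralX, φprod_expectation_lie_ringZZ σz_semiconjBy_σx,
      φprod_expectation_lie_ringZZ σz_semiconjBy_σy, add_zero, sub_zero]
  refine ⟨hexp, ?_⟩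
  simpa [hexp] using norm_star_dotProduct_mulVec_le ⁅HB N, HC N⁆ star_φprod_dotProduct_φprod

/-- In the product state `|+z⟩₀ ⊗ |+x⟩^{⊗N}`, the expectation
value of the MCS commutator is exactly `2 i N²`; consequently
`‖⁅H_B, H_C⁆‖ ≥ 2N²`, i.e. the commutator grows superextensively
(quadratically) with system size. -/
theorem mcs_commutator_superextensive (N : ℕ) (hN : 3 ≤ N) :
    star (φprod N) ⬝ᵥ ((⁅HB N, HC N⁆).mulVec (φprod N))
        = 2 * Complex.I * (N : ℂ) ^ 2 ∧
    2 * (N : ℝ) ^ 2 ≤ ‖⁅HB N, HC N⁆‖ :=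
  mcs_commutator_superextensive_general N
end
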